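/- arXiv:1909.12765 — 4 statements merged into one kernel-verified Lean document; each statement's English description precedes it below -/
import Mathlib

section
/- Let A_K, P, P⁺, Q, R, K be real matrices of compatible dimensions with P, P⁺, Q, R symmetric positive definite, and suppose A_Kᵀ P⁺ A_K ≤ P − (Q + Kᵀ R K) − ε·I for some ε > 0 with P⁺ ≤ c_u·I. Suppose a vector Δx ∈ ℝⁿ and a remainder vector φ ∈ ℝⁿ satisfy ‖φ‖ ≤ L‖Δx‖ with L ≤ √((c_{u,2}+ε)/c_u) − √(c_{u,2}/c_u), where c_{u,2} ≥ λ_max(P − (ε·I + Q + Kᵀ R K)). Then ‖A_K Δx + φ‖²_{P⁺} ≤ ‖Δx‖²_P − ‖Δx‖²_Q − ‖KΔx‖²_R. -/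
open Matrix

/-- Quadratic form `xᵀ M x`. -/
noncomputable def qf {n : ℕ} (M : Matrix (Fin n) (Fin n) ℝ) (x : Fin n → ℝ) : ℝ :=
  x ⬝ᵥ M.mulVec x

/-- Euclidean norm of a vector in `ℝⁿ`. -/
noncomputable def eunorm {n : ℕ} (x : Fin n → ℝ) : ℝ :=
  Real.sqrt (x ⬝ᵥ x)

lemma qf_nonneg {n : ℕ} {M : Matrix (Fin n) (Fin n) ℝ} (h : M.PosSemidef)
    (x : Fin n → ℝ) : 0 ≤ qf M x := by
  simpa [qf] using h.dotProduct_mulVec_nonneg x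

lemma dot_mulVec_symm {n : ℕ} {M : Matrix (Fin n) (Fin n) ℝ} (hM : Mᵀ = M)
    (a b : Fin n → ℝ) : a ⬝ᵥ M.mulVec b = b ⬝ᵥ M.mulVec a := by
  calc a ⬝ᵥ M.mulVec b = a ᵥ* M ⬝ᵥ b := dotProduct_mulVec _ _ _
    _ = a ᵥ* Mᵀᵀ ⬝ᵥ b := by rw [transpose_transpose]
    _ = Mᵀ *ᵥ a ⬝ᵥ b := by rw [vecMul_transpose]
    _ = M *ᵥ a ⬝ᵥ b := by rw [hM]
    _ = b ⬝ᵥ M.mulVec a := dotProduct_comm _ _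

lemma qf_add {n : ℕ} {M : Matrix (Fin n) (Fin n) ℝ} (hM : Mᵀ = M)
    (x y : Fin n → ℝ) :
    qf M (x + y) = qf M x + 2 * (x ⬝ᵥ M.mulVec y) + qf M y := by
  have h := dot_mulVec_symm hM y x
  simp only [qf, Matrix.mulVec_add, dotProduct_add, add_dotProduct]
  rw [h]; ring

lemma qf_conj {n p : ℕ} (B : Matrix (Fin p) (Fin n) ℝ) (M : Matrix (Fin p) (Fin p) ℝ)
    (x : Fin n → ℝ) : x ⬝ᵥ (Bᵀ * M * B).mulVec x = qf M (B.mulVec x) := by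
  rw [qf, ← mulVec_mulVec, ← mulVec_mulVec, dotProduct_mulVec, vecMul_transpose]

lemma qf_cs {n : ℕ} {M : Matrix (Fin n) (Fin n) ℝ} (h : M.PosSemidef)
    (x y : Fin n → ℝ) : (x ⬝ᵥ M.mulVec y) ^ 2 ≤ qf M x * qf M y := by
  have hsym : Mᵀ = M := h.1
  have key : ∀ t : ℝ, 0 ≤ qf M x * (t * t) + (2 * (x ⬝ᵥ M.mulVec y)) * t + qf M y := by
    intro t
    have h0 := qf_nonneg h (t • x + y)
    have hexp := qf_add hsym (t • x) y
    have h1 : qf M (t • x) = qf M x * (t * t) := by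
      simp [qf, Matrix.mulVec_smul, smul_dotProduct, dotProduct_smul, smul_eq_mul]; ring
    have h2 : (t • x) ⬝ᵥ M.mulVec y = t * (x ⬝ᵥ M.mulVec y) := by
      simp [smul_dotProduct, smul_eq_mul]
    rw [hexp, h1, h2] at h0
    nlinarith [h0]
  have := discrim_le_zero key
  rw [discrim] at this
  nlinarith [this]

lemma scalar_aux (ε c_u c_u2 L a b c s2 : ℝ) (hε : 0 < ε) (hcu : 0 < c_u)
    (hc2 : 0 ≤ c_u2) (hL0 : 0 ≤ L)
    (hL : L ≤ Real.sqrt ((c_u2 + ε) / c_u) - Real.sqrt (c_u2 / c_u))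
    (hs2 : 0 ≤ s2) (ha0 : 0 ≤ a) (hb0 : 0 ≤ b)
    (ha2 : a ≤ c_u2 * s2) (hb2 : b ≤ c_u * (L ^ 2 * s2)) (hcs : c ^ 2 ≤ a * b) :
    2 * c + b ≤ ε * s2 := by
  have hsu0 : 0 < Real.sqrt c_u := Real.sqrt_pos.mpr hcu
  have hsu2 : Real.sqrt c_u * Real.sqrt c_u = c_u := Real.mul_self_sqrt hcu.le
  have hs2u0 : 0 ≤ Real.sqrt c_u2 := Real.sqrt_nonneg _
  have hs2u2 : Real.sqrt c_u2 * Real.sqrt c_u2 = c_u2 := Real.mul_self_sqrt hc2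
  have hss0 : 0 ≤ Real.sqrt s2 := Real.sqrt_nonneg _
  have hss2 : Real.sqrt s2 * Real.sqrt s2 = s2 := Real.mul_self_sqrt hs2
  -- c ≤ √a √b
  have hc' : c ≤ Real.sqrt a * Real.sqrt b := by
    calc c ≤ |c| := le_abs_self c
      _ = Real.sqrt (c ^ 2) := (Real.sqrt_sq_eq_abs c).symm
      _ ≤ Real.sqrt (a * b) := Real.sqrt_le_sqrt hcs
      _ = Real.sqrt a * Real.sqrt b := Real.sqrt_mul ha0 b
  have hsa : Real.sqrt a ≤ Real.sqrt c_u2 * Real.sqrt s2 := by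
    rw [← Real.sqrt_mul hc2]; exact Real.sqrt_le_sqrt ha2
  have hsb : Real.sqrt b ≤ Real.sqrt c_u * (L * Real.sqrt s2) := by
    have heq : Real.sqrt (c_u * (L ^ 2 * s2))
        = Real.sqrt c_u * (L * Real.sqrt s2) := by
      rw [Real.sqrt_mul hcu.le, Real.sqrt_mul (sq_nonneg L), Real.sqrt_sq hL0]
    rw [← heq]; exact Real.sqrt_le_sqrt hb2
  -- key inequality from hL
  have hkey : c_u * L ^ 2 + 2 * L * (Real.sqrt c_u * Real.sqrt c_u2) ≤ ε := by
    have hd1 : Real.sqrt (c_u2 / c_u) = Real.sqrt c_u2 / Real.sqrt c_u :=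
      Real.sqrt_div hc2 _
    have hd2 : Real.sqrt ((c_u2 + ε) / c_u)
        = Real.sqrt (c_u2 + ε) / Real.sqrt c_u :=
      Real.sqrt_div (by linarith) _
    rw [hd1, hd2] at hL
    have hmul : L * Real.sqrt c_u + Real.sqrt c_u2 ≤ Real.sqrt (c_u2 + ε) := by
      have h := mul_le_mul_of_nonneg_right hL hsu0.le
      rw [sub_mul, div_mul_cancel₀ _ hsu0.ne', div_mul_cancel₀ _ hsu0.ne'] at h
      linarith
    have hsq : (L * Real.sqrt c_u + Real.sqrt c_u2) ^ 2 ≤ c_u2 + ε := by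
      have hnn : 0 ≤ L * Real.sqrt c_u + Real.sqrt c_u2 := by positivity
      have h2 : Real.sqrt (c_u2 + ε) * Real.sqrt (c_u2 + ε) = c_u2 + ε :=
        Real.mul_self_sqrt (by linarith)
      nlinarith [hmul, hnn, h2]
    nlinarith [hsq, hsu2, hs2u2]
  -- combine
  have hsa0 : 0 ≤ Real.sqrt a := Real.sqrt_nonneg _
  have hsb0 : 0 ≤ Real.sqrt b := Real.sqrt_nonneg _
  have h2c : 2 * c ≤ 2 * (Real.sqrt c_u2 * Real.sqrt s2) * (Real.sqrt c_u * (L * Real.sqrt s2)) := by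
    have : Real.sqrt a * Real.sqrt b
        ≤ (Real.sqrt c_u2 * Real.sqrt s2) * (Real.sqrt c_u * (L * Real.sqrt s2)) := by
      apply mul_le_mul hsa hsb hsb0 (by positivity)
    linarith [hc']
  have heq2 : 2 * (Real.sqrt c_u2 * Real.sqrt s2) * (Real.sqrt c_u * (L * Real.sqrt s2))
      = 2 * L * (Real.sqrt c_u * Real.sqrt c_u2) * s2 := by
    linear_combination (2 * L * (Real.sqrt c_u * Real.sqrt c_u2)) * hss2
  have hfin : (c_u * L ^ 2 + 2 * L * (Real.sqrt c_u * Real.sqrt c_u2)) * s2 ≤ ε * s2 :=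
    mul_le_mul_of_nonneg_right hkey hs2
  rw [heq2] at h2c
  nlinarith [h2c, hb2, hfin]

theorem stmt3 {n m : ℕ}
    (A_K P Pp Q : Matrix (Fin n) (Fin n) ℝ)
    (R : Matrix (Fin m) (Fin m) ℝ) (K : Matrix (Fin m) (Fin n) ℝ)
    (ε c_u c_u2 L : ℝ)
    (hP : P.PosDef) (hPp : Pp.PosDef) (hQ : Q.PosDef) (hR : R.PosDef)
    (hε : 0 < ε) (hcu : 0 < c_u) (hc2 : 0 ≤ c_u2)
    -- matrix inequality A_Kᵀ P⁺ A_K ≤ P − (Q + Kᵀ R K) − ε I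
    (hLMI : (P - (Q + Kᵀ * R * K) - ε • (1 : Matrix (Fin n) (Fin n) ℝ)
              - A_Kᵀ * Pp * A_K).PosSemidef)
    -- P⁺ ≤ c_u I
    (hPu : (c_u • (1 : Matrix (Fin n) (Fin n) ℝ) - Pp).PosSemidef)
    -- c_{u,2} ≥ λ_max(P − (ε I + Q + Kᵀ R K)), expressed in the Loewner order
    (hc2max : (c_u2 • (1 : Matrix (Fin n) (Fin n) ℝ)
              - (P - (ε • (1 : Matrix (Fin n) (Fin n) ℝ) + Q + Kᵀ * R * K))).PosSemidef)
    (Δx φ : Fin n → ℝ)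
    (hφ : eunorm φ ≤ L * eunorm Δx) (hL0 : 0 ≤ L)
    (hL : L ≤ Real.sqrt ((c_u2 + ε) / c_u) - Real.sqrt (c_u2 / c_u)) :
    qf Pp (A_K.mulVec Δx + φ) ≤ qf P Δx - qf Q Δx - qf R (K.mulVec Δx) := by
  have hPpsym : Ppᵀ = Pp := hPp.posSemidef.1
  have hs2 : (0:ℝ) ≤ Δx ⬝ᵥ Δx := by
    simp only [dotProduct]
    exact Finset.sum_nonneg fun i _ => mul_self_nonneg _
  have ha0 : 0 ≤ qf Pp (A_K.mulVec Δx) := qf_nonneg hPp.posSemidef _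
  have hb0 : 0 ≤ qf Pp φ := qf_nonneg hPp.posSemidef _
  have hexp : qf Pp (A_K.mulVec Δx + φ)
      = qf Pp (A_K.mulVec Δx) + 2 * ((A_K.mulVec Δx) ⬝ᵥ Pp.mulVec φ) + qf Pp φ :=
    qf_add hPpsym _ _
  -- LMI consequence
  have h1 : qf Pp (A_K.mulVec Δx) + ε * (Δx ⬝ᵥ Δx)
      ≤ qf P Δx - qf Q Δx - qf R (K.mulVec Δx) := by
    have h0 := hLMI.dotProduct_mulVec_nonneg Δx
    simp only [star_trivial, Matrix.sub_mulVec, Matrix.add_mulVec, dotProduct_sub,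
      dotProduct_add, Matrix.smul_mulVec, Matrix.one_mulVec, dotProduct_smul,
      smul_eq_mul, qf_conj A_K Pp Δx, qf_conj K R Δx] at h0
    simp only [qf] at h0 ⊢
    linarith [h0]
  -- a is bounded by c_u2 * (Δx ⬝ᵥ Δx)
  have ha2 : qf Pp (A_K.mulVec Δx) ≤ c_u2 * (Δx ⬝ᵥ Δx) := by
    have h0 := hc2max.dotProduct_mulVec_nonneg Δx
    simp only [star_trivial, Matrix.sub_mulVec, Matrix.add_mulVec, dotProduct_sub,
      dotProduct_add, Matrix.smul_mulVec, Matrix.one_mulVec, dotProduct_smul,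
      smul_eq_mul, qf_conj K R Δx] at h0
    have h1' := h1
    simp only [qf] at h0 h1' ⊢
    linarith
  -- norm of φ
  have hφ2 : φ ⬝ᵥ φ ≤ L ^ 2 * (Δx ⬝ᵥ Δx) := by
    have hφφ : (0:ℝ) ≤ φ ⬝ᵥ φ := by
      simp only [dotProduct]
      exact Finset.sum_nonneg fun i _ => mul_self_nonneg _
    have h1' : φ ⬝ᵥ φ = eunorm φ ^ 2 := by
      rw [eunorm, Real.sq_sqrt hφφ]
    have h2' : eunorm Δx ^ 2 = Δx ⬝ᵥ Δx := by
      rw [eunorm, Real.sq_sqrt hs2]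
    have h3' : eunorm φ ^ 2 ≤ (L * eunorm Δx) ^ 2 :=
      pow_le_pow_left₀ (Real.sqrt_nonneg _) hφ 2
    rw [h1']
    calc eunorm φ ^ 2 ≤ (L * eunorm Δx) ^ 2 := h3'
      _ = L ^ 2 * (Δx ⬝ᵥ Δx) := by rw [mul_pow, h2']
  have hb2 : qf Pp φ ≤ c_u * (L ^ 2 * (Δx ⬝ᵥ Δx)) := by
    have h0 := hPu.dotProduct_mulVec_nonneg φ
    simp only [star_trivial, Matrix.sub_mulVec, dotProduct_sub, Matrix.smul_mulVec,
      Matrix.one_mulVec, dotProduct_smul, smul_eq_mul] at h0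
    have hqb : qf Pp φ ≤ c_u * (φ ⬝ᵥ φ) := by rw [qf]; linarith
    have := mul_le_mul_of_nonneg_left hφ2 hcu.le
    linarith
  -- Cauchy-Schwarz
  have hcs : ((A_K.mulVec Δx) ⬝ᵥ Pp.mulVec φ) ^ 2
      ≤ qf Pp (A_K.mulVec Δx) * qf Pp φ := qf_cs hPp.posSemidef _ _
  have hmain := scalar_aux ε c_u c_u2 L (qf Pp (A_K.mulVec Δx)) (qf Pp φ)
    ((A_K.mulVec Δx) ⬝ᵥ Pp.mulVec φ) (Δx ⬝ᵥ Δx) hε hcu hc2 hL0 hL hs2 ha0 hb0 ha2 hb2 hcs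
  linarith [hexp, h1, hmain]
end

section
/- Let X, X⁺ be symmetric positive definite n×n matrices and Y an m×n matrix, and let A, B, Q, R be matrices with Q symmetric positive definite of size n and R symmetric positive definite of size m, and ε > 0. If the block matrix [[X, (AX+BY)ᵀ, ((Q+εI)^{1/2}X)ᵀ, (R^{1/2}Y)ᵀ], [AX+BY, X⁺, 0, 0], [(Q+εI)^{1/2}X, 0, I, 0], [R^{1/2}Y, 0, 0, I]] is positive semidefinite, then with P := X⁻¹, P⁺ := (X⁺)⁻¹, and K := Y X⁻¹, it holds that (A+BK)ᵀ P⁺ (A+BK) ≤ P − (Q + Kᵀ R K) − ε·I. -/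
open Matrix

namespace Matrix.PosSemidef

open scoped ComplexOrder

/-- The positive semidefinite square root of a positive semidefinite matrix
(the definition of `Matrix.PosSemidef.sqrt` in Mathlib of December 2024, since removed). -/
noncomputable def sqrt {n 𝕜 : Type*} [Fintype n] [RCLike 𝕜] [DecidableEq n]
    {A : Matrix n n 𝕜} (hA : A.PosSemidef) : Matrix n n 𝕜 :=
  hA.1.eigenvectorUnitary.1 * diagonal ((↑) ∘ (√·) ∘ hA.1.eigenvalues) *
  (star hA.1.eigenvectorUnitary : Matrix n n 𝕜)

lemma sqrt_mul_self {n 𝕜 : Type*} [Fintype n] [RCLike 𝕜] [DecidableEq n]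
    {A : Matrix n n 𝕜} (hA : A.PosSemidef) : hA.sqrt * hA.sqrt = A := by
  have hU : (star hA.1.eigenvectorUnitary : Matrix n n 𝕜) * hA.1.eigenvectorUnitary.1 = 1 :=
    Unitary.coe_star_mul_self _
  have hsp := hA.1.spectral_theorem
  rw [Unitary.conjStarAlgAut_apply] at hsp
  unfold sqrt
  calc _ = hA.1.eigenvectorUnitary.1 * (diagonal ((↑) ∘ (√·) ∘ hA.1.eigenvalues) *
        ((star hA.1.eigenvectorUnitary : Matrix n n 𝕜) * hA.1.eigenvectorUnitary.1) *
        diagonal ((↑) ∘ (√·) ∘ hA.1.eigenvalues)) *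
        (star hA.1.eigenvectorUnitary : Matrix n n 𝕜) := by simp only [Matrix.mul_assoc]
    _ = _ := by
      rw [hU, Matrix.mul_one, diagonal_mul_diagonal]
      conv_rhs => rw [hsp]
      congr 3
      funext i
      simp only [Function.comp_apply]
      rw [← RCLike.ofReal_mul, Real.mul_self_sqrt (hA.eigenvalues_nonneg i)]

lemma posSemidef_sqrt {n 𝕜 : Type*} [Fintype n] [RCLike 𝕜] [DecidableEq n]
    {A : Matrix n n 𝕜} (hA : A.PosSemidef) : hA.sqrt.PosSemidef := by
  unfold sqrt
  rw [star_eq_conjTranspose]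
  refine PosSemidef.mul_mul_conjTranspose_same ?_ _
  rw [posSemidef_diagonal_iff]
  intro i
  exact RCLike.ofReal_nonneg.mpr (Real.sqrt_nonneg _)

end Matrix.PosSemidef

lemma ctr_real {a b : Type*} (M : Matrix a b ℝ) : Mᴴ = Mᵀ := by
  ext i j; simp [conjTranspose_apply]

theorem stmt4 {n m : ℕ}
    (X Xp A Q : Matrix (Fin n) (Fin n) ℝ)
    (B : Matrix (Fin n) (Fin m) ℝ) (Y : Matrix (Fin m) (Fin n) ℝ)
    (R : Matrix (Fin m) (Fin m) ℝ) (ε : ℝ)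
    (hX : X.PosDef) (hXp : Xp.PosDef) (hQ : Q.PosDef) (hR : R.PosDef) (hε : 0 < ε)
    (hQε : (Q + ε • (1 : Matrix (Fin n) (Fin n) ℝ)).PosSemidef)
    (hLMI :
      (Matrix.fromBlocks
        (Matrix.fromBlocks X (A * X + B * Y)ᵀ (A * X + B * Y) Xp)
        (Matrix.fromBlocks (hQε.sqrt * X)ᵀ (hR.posSemidef.sqrt * Y)ᵀ 0 0)
        (Matrix.fromBlocks (hQε.sqrt * X) 0 (hR.posSemidef.sqrt * Y) 0)
        (Matrix.fromBlocks 1 0 0 1)).PosSemidef) :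
    ((X⁻¹) - (Q + (Y * X⁻¹)ᵀ * R * (Y * X⁻¹)) - ε • (1 : Matrix (Fin n) (Fin n) ℝ)
      - (A + B * (Y * X⁻¹))ᵀ * (Xp⁻¹) * (A + B * (Y * X⁻¹))).PosSemidef := by
  classical
  set S := hQε.sqrt with hSdef
  set T := hR.posSemidef.sqrt with hTdef
  have hS2 : S * S = Q + ε • 1 := hQε.sqrt_mul_self
  have hT2 : T * T = R := hR.posSemidef.sqrt_mul_self
  have hSt : Sᵀ = S := by rw [← ctr_real]; exact hQε.posSemidef_sqrt.1
  have hTt : Tᵀ = T := by rw [← ctr_real]; exact hR.posSemidef.posSemidef_sqrt.1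
  have hXt : Xᵀ = X := by rw [← ctr_real]; exact hX.1
  have hXit : (X⁻¹)ᵀ = X⁻¹ := by rw [← ctr_real]; exact hX.1.inv
  haveI := hX.isUnit.invertible
  haveI := hXp.isUnit.invertible
  have e1 : X⁻¹ * X = 1 := inv_mul_of_invertible X
  have e2 : X * X⁻¹ = 1 := mul_inv_of_invertible X
  set M11 : Matrix (Fin n ⊕ Fin n) (Fin n ⊕ Fin n) ℝ :=
    Matrix.fromBlocks X (A * X + B * Y)ᵀ (A * X + B * Y) Xp with hM11
  set M12 : Matrix (Fin n ⊕ Fin n) (Fin n ⊕ Fin m) ℝ :=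
    Matrix.fromBlocks (S * X)ᵀ (T * Y)ᵀ 0 0 with hM12
  have hM12H : M12ᴴ = Matrix.fromBlocks (S * X) 0 (T * Y) 0 := by
    rw [hM12, fromBlocks_conjTranspose]
    simp [ctr_real]
  -- step 1: rephrase hLMI
  have h1 : (Matrix.fromBlocks M11 M12 M12ᴴ
      (1 : Matrix (Fin n ⊕ Fin m) (Fin n ⊕ Fin m) ℝ)).PosSemidef := by
    rw [hM12H, ← fromBlocks_one]
    exact hLMI
  -- step 2: first Schur complement
  haveI : Invertible (1 : Matrix (Fin n ⊕ Fin m) (Fin n ⊕ Fin m) ℝ) := invertibleOne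
  have h2 : (M11 - M12 * M12ᴴ).PosSemidef := by
    have := (PosDef.fromBlocks₂₂ M11 M12 Matrix.PosDef.one).mp h1
    simpa using this
  -- step 3: compute the product
  have hprod : M12 * M12ᴴ =
      Matrix.fromBlocks (X * (Q + ε • 1) * X + Yᵀ * R * Y) 0 0 0 := by
    have hblock : (S * X)ᵀ * (S * X) + (T * Y)ᵀ * (T * Y)
        = X * (Q + ε • 1) * X + Yᵀ * R * Y := by
      rw [transpose_mul, transpose_mul, hSt, hTt, hXt, ← hS2, ← hT2]
      simp only [Matrix.mul_assoc]
    rw [hM12H, hM12, fromBlocks_multiply]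
    simp only [Matrix.mul_zero, Matrix.zero_mul, add_zero, zero_add]
    rw [hblock]
  have h3 : (Matrix.fromBlocks (X - (X * (Q + ε • 1) * X + Yᵀ * R * Y))
      (A * X + B * Y)ᵀ ((A * X + B * Y)ᵀ)ᴴ Xp).PosSemidef := by
    have hCT : ((A * X + B * Y)ᵀ)ᴴ = A * X + B * Y := by
      rw [ctr_real, transpose_transpose]
    rw [hCT]
    have : M11 - M12 * M12ᴴ = Matrix.fromBlocks
        (X - (X * (Q + ε • 1) * X + Yᵀ * R * Y)) (A * X + B * Y)ᵀ (A * X + B * Y) Xp := by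
      rw [hprod, hM11]
      ext (i | i) (j | j) <;> simp [fromBlocks, Matrix.sub_apply]
    rw [← this]
    exact h2
  -- step 4: second Schur complement
  have h4 : (X - (X * (Q + ε • 1) * X + Yᵀ * R * Y)
      - (A * X + B * Y)ᵀ * Xp⁻¹ * ((A * X + B * Y)ᵀ)ᴴ).PosSemidef :=
    (PosDef.fromBlocks₂₂ _ _ hXp).mp h3
  have hCT : ((A * X + B * Y)ᵀ)ᴴ = A * X + B * Y := by
    rw [ctr_real, transpose_transpose]
  rw [hCT] at h4
  -- step 5: conjugate by X⁻¹
  have h5 := h4.mul_mul_conjTranspose_same X⁻¹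
  rw [ctr_real, hXit] at h5
  -- algebraic identification
  have hc : (A * X + B * Y) * X⁻¹ = A + B * (Y * X⁻¹) := by
    rw [Matrix.add_mul, Matrix.mul_assoc, Matrix.mul_assoc, e2, Matrix.mul_one]
  have hcT : X⁻¹ * (A * X + B * Y)ᵀ = (A + B * (Y * X⁻¹))ᵀ := by
    rw [← hc, transpose_mul, hXit]
  have t2 : X⁻¹ * (X * (Q + ε • 1) * X) * X⁻¹ = Q + ε • 1 := by
    have : X⁻¹ * (X * (Q + ε • 1) * X) * X⁻¹
        = (X⁻¹ * X) * (Q + ε • 1) * (X * X⁻¹) := by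
      simp only [Matrix.mul_assoc]
    rw [this, e1, e2, Matrix.one_mul, Matrix.mul_one]
  have t3 : X⁻¹ * (Yᵀ * R * Y) * X⁻¹ = (Y * X⁻¹)ᵀ * R * (Y * X⁻¹) := by
    rw [transpose_mul, hXit]
    simp only [Matrix.mul_assoc]
  have t4 : X⁻¹ * ((A * X + B * Y)ᵀ * Xp⁻¹ * (A * X + B * Y)) * X⁻¹
      = (A + B * (Y * X⁻¹))ᵀ * Xp⁻¹ * (A + B * (Y * X⁻¹)) := by
    have : X⁻¹ * ((A * X + B * Y)ᵀ * Xp⁻¹ * (A * X + B * Y)) * X⁻¹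
        = (X⁻¹ * (A * X + B * Y)ᵀ) * Xp⁻¹ * ((A * X + B * Y) * X⁻¹) := by
      simp only [Matrix.mul_assoc]
    rw [this, hcT, hc]
  have key : X⁻¹ * (X - (X * (Q + ε • 1) * X + Yᵀ * R * Y)
      - (A * X + B * Y)ᵀ * Xp⁻¹ * (A * X + B * Y)) * X⁻¹
      = (X⁻¹) - (Q + (Y * X⁻¹)ᵀ * R * (Y * X⁻¹)) - ε • (1 : Matrix (Fin n) (Fin n) ℝ)
        - (A + B * (Y * X⁻¹))ᵀ * (Xp⁻¹) * (A + B * (Y * X⁻¹)) := by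
    generalize hP2 : X * (Q + ε • 1) * X = P2 at t2 ⊢
    generalize hW : (A * X + B * Y)ᵀ * Xp⁻¹ * (A * X + B * Y) = W at t4 ⊢
    generalize hG : (A + B * (Y * X⁻¹))ᵀ * Xp⁻¹ * (A + B * (Y * X⁻¹)) = G at t4 ⊢
    generalize hH : (Y * X⁻¹)ᵀ * R * (Y * X⁻¹) = H at t3 ⊢
    simp only [Matrix.mul_sub, Matrix.sub_mul, Matrix.mul_add, Matrix.add_mul]
    rw [t2, t3, t4, Matrix.mul_assoc X⁻¹ X X⁻¹, e2, Matrix.mul_one]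
    abel
  rw [← key]
  exact h5
end

section
/- Let X, X⁺ be symmetric positive definite n×n matrices, Y an m×n matrix, S a symmetric positive definite p×p matrix, A, B, C, D matrices of compatible dimensions, and ε̃ > 0. If the block matrix [[X, (AX+BY)ᵀ, (CX+DY)ᵀ, √ε̃·X], [AX+BY, X⁺, 0, 0], [CX+DY, 0, S⁻¹, 0], [√ε̃·X, 0, 0, I]] is positive semidefinite, then with P := X⁻¹, P⁺ := (X⁺)⁻¹, K := YX⁻¹, it holds that (A+BK)ᵀ P⁺ (A+BK) − P ≤ −(C+DK)ᵀ S (C+DK) − ε̃·I. -/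
open Matrix

lemma fromRows_add_fromRows {m₁ m₂ n : Type*} (A₁ C₁ : Matrix m₁ n ℝ) (A₂ C₂ : Matrix m₂ n ℝ) :
    Matrix.fromRows A₁ A₂ + Matrix.fromRows C₁ C₂ = Matrix.fromRows (A₁ + C₁) (A₂ + C₂) := by
  ext (i | i) j <;> simp

theorem stmt15 {n m p : ℕ}
    (X Xp A : Matrix (Fin n) (Fin n) ℝ)
    (B : Matrix (Fin n) (Fin m) ℝ) (Y : Matrix (Fin m) (Fin n) ℝ)
    (S : Matrix (Fin p) (Fin p) ℝ)
    (C : Matrix (Fin p) (Fin n) ℝ) (D : Matrix (Fin p) (Fin m) ℝ)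
    (εt : ℝ)
    (hX : X.PosDef) (hXp : Xp.PosDef) (hS : S.PosDef) (hεt : 0 < εt)
    (hLMI :
      (Matrix.fromBlocks
        (Matrix.fromBlocks X (A * X + B * Y)ᵀ (A * X + B * Y) Xp)
        (Matrix.fromBlocks (C * X + D * Y)ᵀ (Real.sqrt εt • X) 0 0)
        (Matrix.fromBlocks (C * X + D * Y) 0 (Real.sqrt εt • X) 0)
        (Matrix.fromBlocks S⁻¹ 0 0 1)).PosSemidef) :
    (-(C + D * (Y * X⁻¹))ᵀ * S * (C + D * (Y * X⁻¹))
      - εt • (1 : Matrix (Fin n) (Fin n) ℝ)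
      - ((A + B * (Y * X⁻¹))ᵀ * (Xp⁻¹) * (A + B * (Y * X⁻¹)) - X⁻¹)).PosSemidef := by
  set F : Matrix (Fin n) (Fin n) ℝ := A + B * (Y * X⁻¹) with hF
  set G : Matrix (Fin p) (Fin n) ℝ := C + D * (Y * X⁻¹) with hG
  -- invertibility facts
  have hXdet : IsUnit X.det := (isUnit_iff_ne_zero).mpr (ne_of_gt hX.det_pos)
  have hXpdet : IsUnit Xp.det := (isUnit_iff_ne_zero).mpr (ne_of_gt hXp.det_pos)
  have hSdet : IsUnit S.det := (isUnit_iff_ne_zero).mpr (ne_of_gt hS.det_pos)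
  have hXX : X * X⁻¹ = 1 := Matrix.mul_nonsing_inv X hXdet
  have hXX' : X⁻¹ * X = 1 := Matrix.nonsing_inv_mul X hXdet
  have hXpXp : Xp * Xp⁻¹ = 1 := Matrix.mul_nonsing_inv Xp hXpdet
  have hSS : S * S⁻¹ = 1 := Matrix.mul_nonsing_inv S hSdet
  -- symmetry facts
  have hXsym : Xᵀ = X := hX.isHermitian.eq
  have hXinvsym : (X⁻¹)ᵀ = X⁻¹ := hX.isHermitian.inv.eq
  have hXpinvsym : (Xp⁻¹)ᵀ = Xp⁻¹ := hXp.isHermitian.inv.eq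
  have hSsym : Sᵀ = S := hS.isHermitian.eq
  -- rewrite the off-diagonal data blocks
  have hFX : A * X + B * Y = F * X := by
    rw [hF, Matrix.add_mul, Matrix.mul_assoc B, Matrix.mul_assoc Y, hXX',
      Matrix.mul_one]
  have hGX : C * X + D * Y = G * X := by
    rw [hG, Matrix.add_mul, Matrix.mul_assoc D, Matrix.mul_assoc Y, hXX',
      Matrix.mul_one]
  have hsq : Real.sqrt εt * Real.sqrt εt = εt := Real.mul_self_sqrt hεt.le
  -- the conjugating matrix
  set N : Matrix ((Fin n ⊕ Fin n) ⊕ (Fin p ⊕ Fin n)) (Fin n) ℝ :=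
    Matrix.fromRows
      (Matrix.fromRows X⁻¹ (-(Xp⁻¹ * F)))
      (Matrix.fromRows (-(S * G)) (-(Real.sqrt εt • (1 : Matrix (Fin n) (Fin n) ℝ)))) with hN
  have key := hLMI.conjTranspose_mul_mul_same N
  have hNH : Nᴴ = Nᵀ := Matrix.conjTranspose_eq_transpose_of_trivial N
  rw [hNH] at key
  have hEq : Nᵀ *
      (Matrix.fromBlocks
        (Matrix.fromBlocks X (A * X + B * Y)ᵀ (A * X + B * Y) Xp)
        (Matrix.fromBlocks (C * X + D * Y)ᵀ (Real.sqrt εt • X) 0 0)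
        (Matrix.fromBlocks (C * X + D * Y) 0 (Real.sqrt εt • X) 0)
        (Matrix.fromBlocks S⁻¹ 0 0 1)) * N
      = (-(C + D * (Y * X⁻¹))ᵀ * S * (C + D * (Y * X⁻¹))
          - εt • (1 : Matrix (Fin n) (Fin n) ℝ)
          - ((A + B * (Y * X⁻¹))ᵀ * (Xp⁻¹) * (A + B * (Y * X⁻¹)) - X⁻¹)) := by
    rw [hFX, hGX, hN, Matrix.mul_assoc]
    simp only [Matrix.fromBlocks_mul_fromRows, fromRows_add_fromRows,
      Matrix.transpose_fromRows, Matrix.fromCols_mul_fromRows]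
    simp only [Matrix.transpose_mul, Matrix.transpose_neg, Matrix.transpose_smul,
      Matrix.transpose_one, hXinvsym, hXpinvsym, hSsym, hXsym,
      Matrix.mul_neg, Matrix.neg_mul, Matrix.mul_add, Matrix.add_mul,
      Matrix.mul_zero, Matrix.zero_mul, Matrix.mul_one, Matrix.one_mul,
      Matrix.smul_mul, Matrix.mul_smul, add_zero, zero_add, neg_neg, smul_smul, hsq,
      neg_zero, smul_zero]
    -- now pure noncommutative-ring algebra with the inverse identities
    simp only [Matrix.mul_assoc, hXX, hXX', Matrix.mul_one, Matrix.one_mul,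
      Matrix.nonsing_inv_mul_cancel_left _ _ hXdet,
      Matrix.nonsing_inv_mul_cancel_left _ _ hXpdet,
      Matrix.mul_nonsing_inv_cancel_left _ _ hSdet,
      smul_smul, hsq, Matrix.smul_mul, Matrix.mul_smul, smul_neg]
    simp only [hF, hG, Matrix.mul_add, Matrix.add_mul, Matrix.transpose_add,
      Matrix.transpose_mul, Matrix.mul_assoc]
    abel
  rw [hEq] at key
  exact key
end

section
/- Let g : ℝ^p → ℝ be twice continuously differentiable and Θ̄ ⊂ ℝ^p a convex polytope that is a product of intervals (a hyperbox). If for each coordinate direction i the second partial derivative ∂²g/∂θ_i² is nonpositive everywhere on Θ̄ (g is concave along each coordinate direction), then min over Θ̄ of g is attained at a vertex of Θ̄. -/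
lemma update_mem_Icc_aux {p : ℕ} {l u v : Fin p → ℝ} (hv : v ∈ Set.Icc l u)
    {i : Fin p} {t : ℝ} (ht : t ∈ Set.Icc (l i) (u i)) :
    Function.update v i t ∈ Set.Icc l u := by
  constructor <;> intro j <;> by_cases hj : j = i
  · subst hj; simpa using ht.1
  · simpa [Function.update_of_ne hj] using hv.1 j
  · subst hj; simpa using ht.2
  · simpa [Function.update_of_ne hj] using hv.2 j

theorem stmt16 {p : ℕ}
    (g : (Fin p → ℝ) → ℝ) (hg : ContDiff ℝ 2 g)
    (l u : Fin p → ℝ) (hlu : ∀ i, l i ≤ u i)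
    -- concavity of g along every coordinate direction on the hyperbox
    (hconc : ∀ i : Fin p, ∀ θ ∈ Set.Icc l u,
      iteratedDeriv 2 (fun s : ℝ => g (Function.update θ i s)) (θ i) ≤ 0) :
    ∃ v ∈ Set.Icc l u, (∀ i, v i = l i ∨ v i = u i) ∧
      ∀ θ ∈ Set.Icc l u, g v ≤ g θ := by
  -- each coordinate slice is concave on the corresponding interval
  have hslice : ∀ (θ : Fin p → ℝ), θ ∈ Set.Icc l u → ∀ i : Fin p,
      ConcaveOn ℝ (Set.Icc (l i) (u i)) (fun s : ℝ => g (Function.update θ i s)) := by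
    intro θ hθ i
    have hf : ContDiff ℝ 2 (fun s : ℝ => g (Function.update θ i s)) :=
      hg.comp (contDiff_update 2 θ i)
    have hf1 : ContDiff ℝ 1 (deriv fun s : ℝ => g (Function.update θ i s)) := by
      have := (contDiff_succ_iff_deriv (n := 1)
        (f := fun s : ℝ => g (Function.update θ i s))).mp (by exact_mod_cast hf)
      exact this.2.2
    refine concaveOn_of_deriv2_nonpos' (convex_Icc _ _)
      (hf.differentiable (by norm_num)).differentiableOn
      (hf1.differentiable (by norm_num)).differentiableOn ?_
    intro x hx
    have hθ' : Function.update θ i x ∈ Set.Icc l u := update_mem_Icc_aux hθ hx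
    have h := hconc i (Function.update θ i x) hθ'
    have hupd : (fun s : ℝ => g (Function.update (Function.update θ i x) i s))
        = fun s : ℝ => g (Function.update θ i s) := by
      funext s; rw [Function.update_idem]
    rw [hupd, Function.update_self, iteratedDeriv_eq_iterate] at h
    exact h
  -- key: can push any finite set of coordinates to endpoints without increasing g
  have key : ∀ s : Finset (Fin p), ∀ θ ∈ Set.Icc l u, ∃ v ∈ Set.Icc l u,
      (∀ i ∈ s, v i = l i ∨ v i = u i) ∧ g v ≤ g θ := by
    intro s
    induction s using Finset.induction_on with
    | empty => intro θ hθ; exact ⟨θ, hθ, by simp, le_refl _⟩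
    | insert a s ha ih =>
      intro θ hθ
      obtain ⟨v, hv, hvend, hvle⟩ := ih θ hθ
      have hconcave := hslice v hv a
      have hva : v a ∈ Set.Icc (l a) (u a) := ⟨hv.1 a, hv.2 a⟩
      have hmem : v a ∈ segment ℝ (l a) (u a) := by
        rw [segment_eq_Icc (hlu a)]; exact hva
      have hmin := hconcave.ge_on_segment
        (x := l a) (y := u a) (z := v a)
        ⟨le_refl _, hlu a⟩ ⟨hlu a, le_refl _⟩ hmem
      have hvv : Function.update v a (v a) = v := Function.update_eq_self a v
      rcases le_total (g (Function.update v a (l a))) (g (Function.update v a (u a)))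
        with hle | hle
      · refine ⟨Function.update v a (l a),
          update_mem_Icc_aux hv ⟨le_refl _, hlu a⟩, ?_, ?_⟩
        · intro i hi
          by_cases hia : i = a
          · subst hia; simp
          · rw [Function.update_of_ne hia]
            exact hvend i (Finset.mem_of_mem_insert_of_ne hi hia)
        · calc g (Function.update v a (l a))
              ≤ g (Function.update v a (v a)) := by
                have := min_eq_left hle ▸ hmin; simpa using this
            _ = g v := by rw [hvv]
            _ ≤ g θ := hvle
      · refine ⟨Function.update v a (u a),
          update_mem_Icc_aux hv ⟨hlu a, le_refl _⟩, ?_, ?_⟩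
        · intro i hi
          by_cases hia : i = a
          · subst hia; simp
          · rw [Function.update_of_ne hia]
            exact hvend i (Finset.mem_of_mem_insert_of_ne hi hia)
        · calc g (Function.update v a (u a))
              ≤ g (Function.update v a (v a)) := by
                have := min_eq_right hle ▸ hmin; simpa using this
            _ = g v := by rw [hvv]
            _ ≤ g θ := hvle
  -- get a global minimizer on the compact box
  have hne : (Set.Icc l u).Nonempty := Set.nonempty_Icc.mpr fun i => hlu i
  obtain ⟨θ₀, hθ₀, hmin⟩ := (isCompact_Icc (a := l) (b := u)).exists_isMinOn hne
    hg.continuous.continuousOn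
  obtain ⟨v, hv, hvend, hvle⟩ := key Finset.univ θ₀ hθ₀
  exact ⟨v, hv, fun i => hvend i (Finset.mem_univ i),
    fun θ hθ => hvle.trans (hmin hθ)⟩
end
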